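/- Define i_* : Mod R → Mod oFF_Λ R by (i_*V)(λ)=0 for λ∈Λ and (i_*V)(∞)=V; let j^* : Mod oFF_Λ R → Mod FF_Λ R be restriction along the inclusion j : FF_Λ R → oFF_Λ R; define j_* : Mod FF_Λ R → Mod oFF_Λ R by (j_*M)(λ)=M(λ) for λ∈Λ and (j_*M)(∞)=0; and define i^! : Mod oFF_Λ R → Mod R by i^!(M)=M(∞). Then these functors fit into a recollement of abelian categories: j^* admits a left adjoint j_! and the right adjoint j_*, with j_! and j_* fully faithful; i_* is fully faithful and admits a left adjoint i^* and the right adjoint i^!; and the essential image of i_* equals the full subcategory of those M in Mod oFF_Λ R with j^*(M) = 0. -/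

import Mathlib

set_option linter.unusedSectionVars false
set_option maxHeartbeats 1000000
set_option synthInstance.maxHeartbeats 1000000
set_option maxHeartbeats 2000000

noncomputable section

open CategoryTheory CategoryTheory.Limits

universe u

namespace GliderPaper

/-- A `Γ`-filtration `FR` on a unital ring `R`: additive subgroups `F γ` with
`1 ∈ F 1`, monotone in `γ`, and multiplicative. -/
structure RingFiltration (Γ : Type u) [Group Γ] [PartialOrder Γ] (R : Type u) [Ring R] where
  F : Γ → AddSubgroup R
  one_mem : (1 : R) ∈ F 1
  mono : ∀ {α β : Γ}, α ≤ β → F α ≤ F β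
  mul_mem : ∀ {α β : Γ} {a b : R}, a ∈ F α → b ∈ F β → a * b ∈ F (α * β)

variable {Γ : Type u} [Group Γ] [PartialOrder Γ]
  [CovariantClass Γ Γ (· * ·) (· ≤ ·)] [CovariantClass Γ Γ (Function.swap (· * ·)) (· ≤ ·)]
  {R : Type u} [Ring R]

/-- Objects of the extended filtered companion category `oFF_Λ R`:
the disjoint union `Λ ⊔ {∞}`. -/
inductive OFF (FR : RingFiltration Γ R) (Λ : Set Γ) : Type u
  | of (α : Λ)
  | infty

/-- Objects of the filtered companion category `FF_Λ R`: the set `Λ`. -/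
inductive FF (FR : RingFiltration Γ R) (Λ : Set Γ) : Type u
  | of (α : Λ)

variable (FR : RingFiltration Γ R) (Λ : Set Γ)

namespace OFF

/-- `le X Y` holds iff the canonical morphism `1_{X,Y}` is defined, i.e. `X ≤ Y` in `Λ`,
or `Y = ∞`. -/
def le : OFF FR Λ → OFF FR Λ → Prop
  | of α, of β => (α : Γ) ≤ (β : Γ)
  | _, infty => True
  | infty, of _ => False

open scoped Classical in
/-- The additive subgroup of `R` of morphisms `X ⟶ Y` in `oFF_Λ R`:
`Hom(α,β) = F_{βα⁻¹}R` for `α ≤ β` in `Λ`, `Hom(X,∞) = R`, and `0` otherwise. -/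
noncomputable def homGrp : OFF FR Λ → OFF FR Λ → AddSubgroup R
  | of α, of β => if (α : Γ) ≤ (β : Γ) then FR.F ((β : Γ) * (α : Γ)⁻¹) else ⊥
  | _, infty => ⊤
  | infty, of _ => ⊥

theorem le_refl' : ∀ X : OFF FR Λ, le FR Λ X X
  | of _ => _root_.le_refl _
  | infty => trivial

theorem one_mem_homGrp : ∀ {X Y : OFF FR Λ}, le FR Λ X Y → (1 : R) ∈ homGrp FR Λ X Y
  | of α, of β, h => by
      have h' : (α : Γ) ≤ (β : Γ) := h
      have h1 : (1 : Γ) ≤ (β : Γ) * (α : Γ)⁻¹ := by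
        rw [← mul_inv_cancel (α : Γ)]
        exact mul_le_mul_left h' _
      simpa [homGrp, if_pos h'] using FR.mono h1 FR.one_mem
  | of _, infty, _ => trivial
  | infty, infty, _ => trivial
  | infty, of _, h => h.elim

theorem mul_mem_homGrp : ∀ {X Y Z : OFF FR Λ} {f g : R},
    f ∈ homGrp FR Λ X Y → g ∈ homGrp FR Λ Y Z → g * f ∈ homGrp FR Λ X Z := by
  intro X Y Z f g hf hg
  cases X <;> cases Y <;> cases Z <;> simp only [homGrp] at hf hg ⊢ <;> try trivial
  case of.of.of a b c =>
    by_cases hab : (a : Γ) ≤ (b : Γ)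
    · by_cases hbc : (b : Γ) ≤ (c : Γ)
      · rw [if_pos hab] at hf
        rw [if_pos hbc] at hg
        rw [if_pos (le_trans hab hbc)]
        have := FR.mul_mem hg hf
        rwa [show (c : Γ) * (b : Γ)⁻¹ * ((b : Γ) * (a : Γ)⁻¹) = (c : Γ) * (a : Γ)⁻¹ by
          group] at this
      · rw [if_neg hbc] at hg
        rw [AddSubgroup.mem_bot] at hg
        subst hg
        simp only [zero_mul]
        exact AddSubgroup.zero_mem _
    · rw [if_neg hab] at hf
      rw [AddSubgroup.mem_bot] at hf
      subst hf
      simp only [mul_zero]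
      exact AddSubgroup.zero_mem _
  case of.infty.of a c =>
    rw [AddSubgroup.mem_bot] at hg
    subst hg
    simp only [zero_mul]
    exact AddSubgroup.zero_mem _
  case infty.of.of b c =>
    rw [AddSubgroup.mem_bot] at hf
    subst hf
    simp only [mul_zero]
    exact AddSubgroup.zero_mem _
  case infty.infty.of c =>
    rw [AddSubgroup.mem_bot] at hg
    subst hg
    simp only [zero_mul]
    exact AddSubgroup.zero_mem _

instance : Category (OFF FR Λ) where
  Hom X Y := homGrp FR Λ X Y
  id X := ⟨1, one_mem_homGrp FR Λ (le_refl' FR Λ X)⟩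
  comp f g := ⟨g.1 * f.1, mul_mem_homGrp FR Λ f.2 g.2⟩
  id_comp f := Subtype.ext (mul_one f.1)
  comp_id f := Subtype.ext (one_mul f.1)
  assoc f g h := Subtype.ext (mul_assoc h.1 g.1 f.1).symm

instance : Preadditive (OFF FR Λ) where
  homGroup X Y := inferInstanceAs (AddCommGroup (homGrp FR Λ X Y))
  add_comp _ _ _ f f' g := Subtype.ext (mul_add g.1 f.1 f'.1)
  comp_add _ _ _ f g g' := Subtype.ext (add_mul g.1 g'.1 f.1)

end OFF

namespace FF

/-- The inclusion of the objects of `FF_Λ R` into those of `oFF_Λ R`. -/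
def toOFF : FF FR Λ → OFF FR Λ
  | of α => .of α

instance : Category (FF FR Λ) where
  Hom X Y := OFF.homGrp FR Λ (toOFF FR Λ X) (toOFF FR Λ Y)
  id X := ⟨1, OFF.one_mem_homGrp FR Λ (OFF.le_refl' FR Λ _)⟩
  comp f g := ⟨g.1 * f.1, OFF.mul_mem_homGrp FR Λ f.2 g.2⟩
  id_comp f := Subtype.ext (mul_one f.1)
  comp_id f := Subtype.ext (one_mul f.1)
  assoc f g h := Subtype.ext (mul_assoc h.1 g.1 f.1).symm

instance : Preadditive (FF FR Λ) where
  homGroup X Y := inferInstanceAs (AddCommGroup (OFF.homGrp FR Λ (toOFF FR Λ X) (toOFF FR Λ Y)))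
  add_comp _ _ _ f f' g := Subtype.ext (mul_add g.1 f.1 f'.1)
  comp_add _ _ _ f g g' := Subtype.ext (add_mul g.1 g'.1 f.1)

end FF

/-- The inclusion functor `j : FF_Λ R ⥤ oFF_Λ R`. -/
def jF : FF FR Λ ⥤ OFF FR Λ where
  obj := FF.toOFF FR Λ
  map f := f
  map_id _ := rfl
  map_comp _ _ := rfl

instance : (jF FR Λ).Additive := ⟨rfl⟩

/-- `Mod C`: the category of additive functors from `C` to abelian groups. -/
abbrev Mod (C : Type u) [Category.{u} C] [Preadditive C] : Type (u + 1) :=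
  C ⥤+ AddCommGrpCat.{u}

/-- The component at `X` of a morphism in `Mod C`. -/
def mapp {C : Type u} [Category.{u} C] [Preadditive C] {M N : Mod C} (f : M ⟶ N) (X : C) :
    M.obj.obj X ⟶ N.obj.obj X :=
  f.hom.app X

/-- The canonical morphism `1_{X,Y}` in `oFF_Λ R`, given by `1_R`. -/
def unitHom (X Y : OFF FR Λ) (h : OFF.le FR Λ X Y) : X ⟶ Y :=
  ⟨1, OFF.one_mem_homGrp FR Λ h⟩

/-- The canonical morphism `1_{α,β}` in `FF_Λ R`, given by `1_R`. -/
def unitHomFF (α β : Λ) (h : (α : Γ) ≤ (β : Γ)) : (FF.of α : FF FR Λ) ⟶ FF.of β :=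
  unitHom FR Λ (.of α) (.of β) h

/-- A module `M` over `oFF_Λ R` is a preglider if all the maps `M(1_{X,Y})` are injective. -/
def IsPreglider (M : Mod (OFF FR Λ)) : Prop :=
  ∀ (X Y : OFF FR Λ) (h : OFF.le FR Λ X Y), Function.Injective (M.obj.map (unitHom FR Λ X Y h))

/-- A module `M` over `FF_Λ R` is a prefragment if all the maps `M(1_{α,β})` are injective. -/
def IsPrefragment (M : Mod (FF FR Λ)) : Prop :=
  ∀ (α β : Λ) (h : (α : Γ) ≤ (β : Γ)), Function.Injective (M.obj.map (unitHomFF FR Λ α β h))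

/-- The category of pregliders: the full subcategory of `Mod (oFF_Λ R)` of pregliders. -/
abbrev Preglid : Type (u + 1) :=
  ObjectProperty.FullSubcategory (fun M : Mod (OFF FR Λ) => IsPreglider FR Λ M)

instance : Preadditive (Preglid FR Λ) := Preadditive.fullSubcategory _

/-- The category of prefragments: the full subcategory of `Mod (FF_Λ R)` of prefragments. -/
abbrev Prefrag : Type (u + 1) :=
  ObjectProperty.FullSubcategory (fun M : Mod (FF FR Λ) => IsPrefragment FR Λ M)

instance : Preadditive (Prefrag FR Λ) := Preadditive.fullSubcategory _

/-- The inclusion `Preglid FR Λ ⥤ Mod (oFF_Λ R)`. -/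
def iotaF : Preglid FR Λ ⥤ Mod (OFF FR Λ) := ObjectProperty.ι _

/-- The inclusion `Prefrag FR Λ ⥤ Mod (FF_Λ R)`. -/
def etaF : Prefrag FR Λ ⥤ Mod (FF FR Λ) := ObjectProperty.ι _

/-- The component at `X` of a morphism of pregliders. -/
def pgapp {M N : Preglid FR Λ} (f : M ⟶ N) (X : OFF FR Λ) :
    M.obj.obj.obj X ⟶ N.obj.obj.obj X :=
  mapp f.hom X

/-- The component at `X` of a morphism of prefragments. -/
def pfapp {M N : Prefrag FR Λ} (f : M ⟶ N) (X : FF FR Λ) :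
    M.obj.obj.obj X ⟶ N.obj.obj.obj X :=
  mapp f.hom X

/-- The class `Σ` of morphisms of pregliders all of whose components at objects of `Λ`
are isomorphisms. -/
def SigmaClass : MorphismProperty (Preglid FR Λ) :=
  fun _ _ f => ∀ α : Λ, IsIso (pgapp FR Λ f (.of α))

/-- The category of glider representations: the localization of `Preglid FR Λ` at `Σ`. -/
abbrev Glid : Type (u + 1) := (SigmaClass FR Λ).Localization

/-- The localization functor `Q : Preglid FR Λ ⥤ Glid FR Λ`. -/
def QF : Preglid FR Λ ⥤ Glid FR Λ := (SigmaClass FR Λ).Q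

/-- The restriction functor `j^* : Mod (oFF_Λ R) ⥤ Mod (FF_Λ R)`. -/
def jStar : Mod (OFF FR Λ) ⥤ Mod (FF FR Λ) where
  obj M := ⟨jF FR Λ ⋙ M.obj, by haveI : M.obj.Additive := M.property; exact (inferInstance : (jF FR Λ ⋙ M.obj).Additive)⟩
  map {M N} f := ⟨Functor.whiskerLeft (jF FR Λ) f.hom⟩
  map_id _ := rfl
  map_comp _ _ := rfl

theorem isPrefragment_jStar (M : Mod (OFF FR Λ)) (hM : IsPreglider FR Λ M) :
    IsPrefragment FR Λ ((jStar FR Λ).obj M) :=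
  fun α β h => hM (.of α) (.of β) h

/-- The restriction functor `j^* : Preglid FR Λ ⥤ Prefrag FR Λ`. -/
def jRes : Preglid FR Λ ⥤ Prefrag FR Λ where
  obj M := ⟨(jStar FR Λ).obj M.obj, isPrefragment_jStar FR Λ M.obj M.property⟩
  map f := ⟨(jStar FR Λ).map f.hom⟩
  map_id M := rfl
  map_comp f g := rfl

theorem sigma_isInvertedBy : (SigmaClass FR Λ).IsInvertedBy (jRes FR Λ) := by
  intro M N f hf
  haveI : (AdditiveFunctor.forget (FF FR Λ) AddCommGrpCat.{u}).Faithful :=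
    inferInstance
  haveI : ∀ X : FF FR Λ, IsIso
      (((ObjectProperty.ι (fun M : Mod (FF FR Λ) => IsPrefragment FR Λ M) ⋙
        AdditiveFunctor.forget _ _).map ((jRes FR Λ).map f)).app X) := by
    rintro ⟨α⟩
    exact hf α
  haveI : IsIso ((ObjectProperty.ι (fun M : Mod (FF FR Λ) => IsPrefragment FR Λ M) ⋙
      AdditiveFunctor.forget _ _).map ((jRes FR Λ).map f)) :=
    NatIso.isIso_of_isIso_app _
  exact isIso_of_reflects_iso ((jRes FR Λ).map f)
    (ObjectProperty.ι (fun M : Mod (FF FR Λ) => IsPrefragment FR Λ M) ⋙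
      AdditiveFunctor.forget _ _)

/-- The canonical fully faithful functor `φ : Glid FR Λ ⥤ Prefrag FR Λ`,
the unique functor with `Q ⋙ φ = j^*`. -/
def phiF : Glid FR Λ ⥤ Prefrag FR Λ :=
  Localization.Construction.lift (jRes FR Λ) (sigma_isInvertedBy FR Λ)

theorem phiF_fac : QF FR Λ ⋙ phiF FR Λ = jRes FR Λ :=
  Localization.Construction.fac _ _


/-!
Every morphism `α ⟶ ∞` of `oFF_Λ R` is `1_{α,∞}` followed by an endomorphism `r ∈ R` of `∞`,
and there are no nonzero morphisms `∞ ⟶ α`. Hence an `oFF_Λ R`-module `M` amounts to gluing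
data `(N, V, gen)`: the `FF_Λ R`-module `N = j^* M`, the `R`-module `V = M(∞)`, and maps
`gen α = M(1_{α,∞}) : N(α) → V` with `gen β ∘ N(f) = f • gen α`. In these terms
`i_* V = (0, V, 0)`, `j_* N = (N, 0, 0)` and `j_! N = (N, R ⊗_{FF_Λ R} N, m ↦ 1 ⊗ m)`, and the
adjunctions are read off the triples: `i^! M = V`, `i^* M = V / ∑ im gen` and `j^*` forgets `V`.
Since `j^* j_* N = N`, `j_*` is fully faithful, and therefore so is `j_!`, the other end of the
adjoint triple `j_! ⊣ j^* ⊣ j_*`. Finally `M ≅ i_* i^! M` exactly when `j^* M = 0`.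
-/

namespace Mod

variable {C : Type u} [Category.{u} C] [Preadditive C]

theorem isZero_iff (F : Mod C) : IsZero F ↔ ∀ X : C, IsZero (F.obj.obj X) :=
  ⟨fun h X => (ObjectProperty.ι _ ⋙ (evaluation C AddCommGrpCat).obj X).map_isZero h,
    fun h => .of_full_of_faithful_of_isZero (ObjectProperty.ι _) F (Functor.isZero _ h)⟩

theorem isIso_of_isIso_app {F G : Mod C} (f : F ⟶ G) [∀ X : C, IsIso (f.hom.app X)] : IsIso f :=
  have : IsIso ((ObjectProperty.ι _).map f) := NatIso.isIso_of_isIso_app f.hom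
  isIso_of_reflects_iso f (ObjectProperty.ι _)

end Mod

namespace OFF

variable {FR Λ}

theorem hom_ext {X Y : OFF FR Λ} {f g : X ⟶ Y} (h : f.1 = g.1) : f = g := Subtype.ext h

theorem eq_zero_of_infty_to_of {β : Λ} (f : (infty : OFF FR Λ) ⟶ of β) : f = 0 :=
  hom_ext (AddSubgroup.mem_bot.mp f.2)

def toInfty (X : OFF FR Λ) (r : R) : X ⟶ infty :=
  ⟨r, by cases X <;> exact AddSubgroup.mem_top r⟩

theorem eq_toInfty {X : OFF FR Λ} (f : X ⟶ infty) : f = toInfty X f.1 := rfl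

end OFF

namespace ModFF

variable {FR Λ}

theorem hom_ext {N N' : Mod (FF FR Λ)} {f g : N ⟶ N'}
    (h : ∀ α : Λ, f.hom.app (FF.of α) = g.hom.app (FF.of α)) : f = g :=
  ObjectProperty.hom_ext _ (NatTrans.ext (funext fun ⟨α⟩ => h α))

end ModFF

namespace ModOFF

variable {FR Λ}

def scalarHom (M : Mod (OFF FR Λ)) : R →+* AddMonoid.End (M.obj.obj .infty) where
  toFun r := (M.obj.map (OFF.toInfty .infty r)).hom
  map_one' := congrArg AddCommGrpCat.Hom.hom (M.obj.map_id .infty)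
  map_mul' r s := congrArg AddCommGrpCat.Hom.hom
    (M.obj.map_comp (OFF.toInfty .infty s) (OFF.toInfty .infty r))
  map_zero' := congrArg AddCommGrpCat.Hom.hom (M.obj.map_zero .infty .infty)
  map_add' r s := congrArg AddCommGrpCat.Hom.hom
    (M.obj.map_add (f := OFF.toInfty .infty r) (g := OFF.toInfty .infty s))

instance (M : Mod (OFF FR Λ)) : Module R (M.obj.obj .infty) := Module.compHom _ (scalarHom M)

theorem smul_def (M : Mod (OFF FR Λ)) (r : R) (m : M.obj.obj .infty) :
    r • m = M.obj.map (OFF.toInfty .infty r) m := rfl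

theorem map_toInfty (M : Mod (OFF FR Λ)) {X : OFF FR Λ} (r : R) (m : M.obj.obj X) :
    M.obj.map (OFF.toInfty X r) m = r • M.obj.map (OFF.toInfty X 1) m := by
  rw [smul_def, ← ConcreteCategory.comp_apply, ← M.obj.map_comp,
    show OFF.toInfty X 1 ≫ OFF.toInfty .infty r = OFF.toInfty X r from OFF.hom_ext (mul_one r)]

theorem map_comp_toInfty (M : Mod (OFF FR Λ)) {X Y : OFF FR Λ} (f : X ⟶ Y) (x : M.obj.obj X) :
    M.obj.map (OFF.toInfty Y 1) (M.obj.map f x) = f.1 • M.obj.map (OFF.toInfty X 1) x := by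
  rw [← ConcreteCategory.comp_apply, ← M.obj.map_comp,
    show f ≫ OFF.toInfty Y 1 = OFF.toInfty X f.1 from OFF.hom_ext (one_mul f.1), map_toInfty]

def appInfty {M M' : Mod (OFF FR Λ)} (f : M ⟶ M') :
    M.obj.obj .infty →ₗ[R] M'.obj.obj .infty where
  toFun := f.hom.app .infty
  map_add' := map_add _
  map_smul' r := ConcreteCategory.congr_hom (f.hom.naturality (OFF.toInfty .infty r))

theorem hom_ext {M M' : Mod (OFF FR Λ)} {f g : M ⟶ M'}
    (h : ∀ α : Λ, f.hom.app (.of α) = g.hom.app (.of α))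
    (hinf : f.hom.app .infty = g.hom.app .infty) : f = g :=
  ObjectProperty.hom_ext _ (NatTrans.ext (funext fun | .of α => h α | .infty => hinf))

def homMk {M M' : Mod (OFF FR Λ)} (η : (jStar FR Λ).obj M ⟶ (jStar FR Λ).obj M')
    (φ : M.obj.obj .infty →ₗ[R] M'.obj.obj .infty)
    (hφ : ∀ α : Λ,
      M.obj.map (OFF.toInfty (.of α) 1) ≫ AddCommGrpCat.ofHom φ.toAddMonoidHom =
        η.hom.app (FF.of α) ≫ M'.obj.map (OFF.toInfty (.of α) 1)) :
    M ⟶ M' :=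
  ObjectProperty.homMk
  { app
      | .of α => η.hom.app (FF.of α)
      | .infty => AddCommGrpCat.ofHom φ.toAddMonoidHom
    naturality := by
      rintro (α | _) (β | _) f
      · exact η.hom.naturality f
      · ext m
        change φ (M.obj.map f m) = M'.obj.map f (η.hom.app (FF.of α) m)
        rw [OFF.eq_toInfty f]
        exact (congrArg φ (map_toInfty M _ m)).trans ((φ.map_smul _ _).trans
          ((congrArg (f.1 • ·) (ConcreteCategory.congr_hom (hφ α) m)).trans
            (map_toInfty M' _ _).symm))
      · rw [OFF.eq_zero_of_infty_to_of f, M.obj.map_zero, M'.obj.map_zero, zero_comp, comp_zero]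
      · ext m
        exact φ.map_smul f.1 m }

def spanImage (M : Mod (OFF FR Λ)) : Submodule R (M.obj.obj .infty) :=
  Submodule.span R (⋃ α : Λ, Set.range (M.obj.map (OFF.toInfty (.of α) 1)))

end ModOFF

namespace ModFF

open Finsupp

variable {FR Λ}

/-- The relations presenting `R ⊗_{FF_Λ R} N`, the value at `∞` of `j_! N`, as a quotient
of the free `R`-module on the elements `m ∈ N(α)` (`single ⟨α, m⟩ r` standing for `r ⊗ m`). -/
def lanRel (N : Mod (FF FR Λ)) : Submodule R ((Σ α : Λ, N.obj.obj (FF.of α)) →₀ R) :=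
  Submodule.span R
    ({x | ∃ (α : Λ) (m m' : N.obj.obj (FF.of α)),
        x = single ⟨α, m + m'⟩ 1 - single ⟨α, m⟩ 1 - single ⟨α, m'⟩ 1} ∪
     {x | ∃ (α β : Λ) (f : (FF.of α : FF FR Λ) ⟶ FF.of β) (m : N.obj.obj (FF.of α)),
        x = single ⟨β, N.obj.map f m⟩ 1 - single ⟨α, m⟩ f.1})

abbrev LanInfty (N : Mod (FF FR Λ)) : Type u :=
  ((Σ α : Λ, N.obj.obj (FF.of α)) →₀ R) ⧸ lanRel N

def lanι (N : Mod (FF FR Λ)) (α : Λ) : N.obj.obj (FF.of α) →+ LanInfty N :=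
  AddMonoidHom.mk' (fun m => Submodule.Quotient.mk (single ⟨α, m⟩ 1)) fun m m' => by
    rw [← Submodule.Quotient.mk_add, Submodule.Quotient.eq]
    exact Submodule.subset_span (Or.inl ⟨α, m, m', by abel⟩)

theorem lanι_map (N : Mod (FF FR Λ)) {α β : Λ} (f : (FF.of α : FF FR Λ) ⟶ FF.of β)
    (m : N.obj.obj (FF.of α)) : lanι N β (N.obj.map f m) = f.1 • lanι N α m := by
  change Submodule.Quotient.mk _ = f.1 • Submodule.Quotient.mk _
  rw [← Submodule.Quotient.mk_smul, smul_single_one, Submodule.Quotient.eq]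
  exact Submodule.subset_span (Or.inr ⟨α, β, f, m, rfl⟩)

variable {N : Mod (FF FR Λ)} {P : Type u} [AddCommGroup P] [Module R P]

def lanDesc (φ : ∀ α : Λ, N.obj.obj (FF.of α) →+ P)
    (hφ : ∀ {α β : Λ} (f : (FF.of α : FF FR Λ) ⟶ FF.of β) (m : N.obj.obj (FF.of α)),
      φ β (N.obj.map f m) = f.1 • φ α m) :
    LanInfty N →ₗ[R] P :=
  (lanRel N).liftQ (linearCombination R fun x => φ x.1 x.2) <| Submodule.span_le.mpr <| by
    rintro _ (⟨α, m, m', rfl⟩ | ⟨α, β, f, m, rfl⟩) <;>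
      simp [linearCombination_single, hφ]

@[simp] theorem lanDesc_lanι (φ : ∀ α : Λ, N.obj.obj (FF.of α) →+ P) (hφ) (α : Λ)
    (m : N.obj.obj (FF.of α)) : lanDesc φ hφ (lanι N α m) = φ α m := by
  change linearCombination R (fun x : Σ α : Λ, N.obj.obj (FF.of α) => φ x.1 x.2)
    (single ⟨α, m⟩ 1) = φ α m
  rw [linearCombination_single, one_smul]

theorem lanInfty_hom_ext {f g : LanInfty N →ₗ[R] P}
    (h : ∀ (α : Λ) (m : N.obj.obj (FF.of α)), f (lanι N α m) = g (lanι N α m)) : f = g :=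
  Submodule.linearMap_qext _ (lhom_ext' fun x => LinearMap.ext_ring (h x.1 x.2))

end ModFF

structure GluingData where
  N : Mod (FF FR Λ)
  V : ModuleCat.{u} R
  gen : ∀ α : Λ, N.obj.obj (FF.of α) →+ V
  gen_map : ∀ {α β : Λ} (f : (FF.of α : FF FR Λ) ⟶ FF.of β) (m : N.obj.obj (FF.of α)),
    gen β (N.obj.map f m) = f.1 • gen α m

namespace GluingData

section

variable {FR Λ} (G : GluingData FR Λ)

protected def obj : OFF FR Λ → AddCommGrpCat.{u}
  | .of α => G.N.obj.obj (FF.of α)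
  | .infty => AddCommGrpCat.of G.V

protected def map : ∀ {X Y : OFF FR Λ}, (X ⟶ Y) → (G.obj X ⟶ G.obj Y)
  | .of _, .of _, f => G.N.obj.map (X := FF.of _) (Y := FF.of _) f
  | .of α, .infty, f => AddCommGrpCat.ofHom ((DistribSMul.toAddMonoidHom G.V f.1).comp (G.gen α))
  | .infty, .of _, _ => 0
  | .infty, .infty, f => AddCommGrpCat.ofHom (DistribSMul.toAddMonoidHom G.V f.1)

def toFunctor : OFF FR Λ ⥤ AddCommGrpCat.{u} where
  obj := G.obj
  map := G.map
  map_id := by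
    rintro (α | _)
    · exact G.N.obj.map_id (FF.of α)
    · exact AddCommGrpCat.ext fun (v : G.V) => one_smul R v
  map_comp := by
    rintro (α | _) (β | _) (γ | _) f g
    · exact G.N.obj.map_comp (X := FF.of α) (Y := FF.of β) (Z := FF.of γ) f g
    · exact AddCommGrpCat.ext fun (m : G.N.obj.obj (FF.of α)) =>
        (mul_smul g.1 f.1 (G.gen α m)).trans
          (congrArg (fun x : G.V => g.1 • x) (G.gen_map f m).symm)
    · rw [OFF.eq_zero_of_infty_to_of g, comp_zero]
      exact G.N.obj.map_zero (FF.of α) (FF.of γ)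
    · exact AddCommGrpCat.ext fun m =>
        show (g.1 * f.1) • G.gen α m = g.1 • f.1 • G.gen α m from mul_smul _ _ _
    · exact zero_comp.symm
    · rw [OFF.eq_zero_of_infty_to_of f, zero_comp]
      refine (?_ : G.map (0 : (.infty : OFF FR Λ) ⟶ .infty) = 0).trans zero_comp.symm
      exact AddCommGrpCat.ext fun (v : G.V) => zero_smul R v
    · exact comp_zero.symm
    · exact AddCommGrpCat.ext fun (v : G.V) => mul_smul g.1 f.1 v

instance : G.toFunctor.Additive where
  map_add {X Y} f g := by
    rcases X with α | _ <;> rcases Y with β | _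
    · exact G.N.obj.map_add (X := FF.of α) (Y := FF.of β)
    · exact AddCommGrpCat.ext fun m => add_smul f.1 g.1 (G.gen α m)
    · exact (add_zero 0).symm
    · exact AddCommGrpCat.ext fun (v : G.V) => add_smul f.1 g.1 v

def toMod : Mod (OFF FR Λ) := AdditiveFunctor.of G.toFunctor

theorem toMod_map_toInfty (α : Λ) (m : G.toMod.obj.obj (.of α)) :
    G.toMod.obj.map (OFF.toInfty (.of α) 1) m = G.gen α m :=
  one_smul R (G.gen α m)

def restrictIso : (jStar FR Λ).obj G.toMod ≅ G.N :=
  ObjectProperty.isoMk _ (NatIso.ofComponents (fun ⟨α⟩ => Iso.refl (G.N.obj.obj (FF.of α)))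
    fun {X Y} f => by
      rcases X with ⟨α⟩; rcases Y with ⟨β⟩
      exact (Category.comp_id _).trans (Category.id_comp _).symm)

end

def atInfty (V : ModuleCat.{u} R) : GluingData FR Λ where
  N := ⟨(Functor.const _).obj (AddCommGrpCat.of PUnit),
    .of_isZero (Functor.isZero _ fun _ => AddCommGrpCat.isZero_of_subsingleton (.of PUnit))⟩
  V := V
  gen _ := 0
  gen_map _ _ := (smul_zero _).symm

theorem isZero_atInfty_toMod_of (V : ModuleCat.{u} R) (α : Λ) :
    IsZero ((atInfty FR Λ V).toMod.obj.obj (.of α)) :=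
  AddCommGrpCat.isZero_of_subsingleton (AddCommGrpCat.of PUnit)

def extendByZero (N : Mod (FF FR Λ)) : GluingData FR Λ where
  N := N
  V := ModuleCat.of R PUnit
  gen _ := 0
  gen_map _ _ := Subsingleton.elim _ _

theorem isZero_extendByZero_toMod_infty (N : Mod (FF FR Λ)) :
    IsZero ((extendByZero FR Λ N).toMod.obj.obj .infty) :=
  AddCommGrpCat.isZero_of_subsingleton (AddCommGrpCat.of PUnit)

def lan (N : Mod (FF FR Λ)) : GluingData FR Λ where
  N := N
  V := ModuleCat.of R (ModFF.LanInfty N)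
  gen := ModFF.lanι N
  gen_map := ModFF.lanι_map N

end GluingData

open GluingData

def iLowerStar : ModuleCat.{u} R ⥤ Mod (OFF FR Λ) where
  obj V := (atInfty FR Λ V).toMod
  map φ := ModOFF.homMk 0 φ.hom fun α => (isZero_atInfty_toMod_of FR Λ _ α).eq_of_src _ _
  map_id _ := ModOFF.hom_ext (fun _ => rfl) rfl
  map_comp _ _ := ModOFF.hom_ext (fun _ => rfl) rfl

def iLowerStarHomEquiv (V : ModuleCat.{u} R) (M : Mod (OFF FR Λ)) :
    ((iLowerStar FR Λ).obj V ⟶ M) ≃ (V ⟶ ModuleCat.of R (M.obj.obj .infty)) where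
  toFun θ := ModuleCat.ofHom (ModOFF.appInfty θ)
  invFun ψ := ModOFF.homMk 0 ψ.hom fun α => (isZero_atInfty_toMod_of FR Λ V α).eq_of_src _ _
  left_inv _ := ModOFF.hom_ext (fun α => (isZero_atInfty_toMod_of FR Λ V α).eq_of_src _ _) rfl
  right_inv _ := rfl

def iUpperShriek : Mod (OFF FR Λ) ⥤ ModuleCat.{u} R :=
  Adjunction.rightAdjointOfEquiv (G_obj := fun M => ModuleCat.of R (M.obj.obj .infty))
    (iLowerStarHomEquiv FR Λ) fun _ _ _ _ _ => rfl

def iLowerStarAdj : iLowerStar FR Λ ⊣ iUpperShriek FR Λ := Adjunction.adjunctionOfEquivRight _ _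

def iLowerStarFullyFaithful : (iLowerStar FR Λ).FullyFaithful where
  preimage {V W} θ := iLowerStarHomEquiv FR Λ V ((iLowerStar FR Λ).obj W) θ
  map_preimage {V W} θ :=
    (iLowerStarHomEquiv FR Λ V ((iLowerStar FR Λ).obj W)).symm_apply_apply θ
  preimage_map _ := rfl

theorem spanImage_le_ker_appInfty {M : Mod (OFF FR Λ)} {V : ModuleCat.{u} R}
    (θ : M ⟶ (iLowerStar FR Λ).obj V) :
    ModOFF.spanImage M ≤ LinearMap.ker (ModOFF.appInfty θ) := by
  rw [ModOFF.spanImage, Submodule.span_le]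
  rintro _ ⟨_, ⟨α, rfl⟩, m, rfl⟩
  have h : M.obj.map (OFF.toInfty (.of α) 1) ≫ θ.hom.app .infty = 0 := by
    rw [θ.hom.naturality, (isZero_atInfty_toMod_of FR Λ V α).eq_zero_of_src
      (((iLowerStar FR Λ).obj V).obj.map (OFF.toInfty (.of α) 1))]
    exact comp_zero
  exact ConcreteCategory.congr_hom h m

def iUpperStarHomEquiv (M : Mod (OFF FR Λ)) (V : ModuleCat.{u} R) :
    (ModuleCat.of R (M.obj.obj .infty ⧸ ModOFF.spanImage M) ⟶ V) ≃
      (M ⟶ (iLowerStar FR Λ).obj V) where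
  toFun ψ := ModOFF.homMk 0 (ψ.hom ∘ₗ (ModOFF.spanImage M).mkQ) fun α =>
    Eq.trans (AddCommGrpCat.ext fun m => (congrArg ψ.hom ((Submodule.Quotient.mk_eq_zero _).mpr
      (Submodule.subset_span (Set.mem_iUnion.mpr ⟨α, m, rfl⟩)))).trans (map_zero _))
      zero_comp.symm
  invFun θ := ModuleCat.ofHom
    ((ModOFF.spanImage M).liftQ (ModOFF.appInfty θ) (spanImage_le_ker_appInfty FR Λ θ))
  left_inv _ := ModuleCat.hom_ext (Submodule.linearMap_qext _ rfl)
  right_inv _ := ModOFF.hom_ext (fun α => (isZero_atInfty_toMod_of FR Λ V α).eq_of_tgt _ _) rfl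

theorem iUpperStarHomEquiv_comp (M : Mod (OFF FR Λ)) (V W : ModuleCat.{u} R) (g : V ⟶ W)
    (ψ : ModuleCat.of R (M.obj.obj .infty ⧸ ModOFF.spanImage M) ⟶ V) :
    iUpperStarHomEquiv FR Λ M W (ψ ≫ g) =
      iUpperStarHomEquiv FR Λ M V ψ ≫ (iLowerStar FR Λ).map g :=
  ModOFF.hom_ext (fun α => (isZero_atInfty_toMod_of FR Λ W α).eq_of_tgt _ _)
    (AddCommGrpCat.ext fun _ => rfl)

def iUpperStar : Mod (OFF FR Λ) ⥤ ModuleCat.{u} R :=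
  Adjunction.leftAdjointOfEquiv (iUpperStarHomEquiv FR Λ) (iUpperStarHomEquiv_comp FR Λ)

def iUpperStarAdj : iUpperStar FR Λ ⊣ iLowerStar FR Λ :=
  Adjunction.adjunctionOfEquivLeft (iUpperStarHomEquiv FR Λ) (iUpperStarHomEquiv_comp FR Λ)

theorem iLowerStar_essImage_iff (M : Mod (OFF FR Λ)) :
    (iLowerStar FR Λ).essImage M ↔ IsZero ((jStar FR Λ).obj M) := by
  rw [Mod.isZero_iff]
  constructor
  · rintro ⟨V, ⟨e⟩⟩ ⟨α⟩
    exact (isZero_atInfty_toMod_of FR Λ V α).of_iso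
      ((ObjectProperty.ι _ ⋙ (evaluation _ AddCommGrpCat).obj (OFF.of α)).mapIso e.symm)
  · intro h
    have : ∀ X, IsIso (((iLowerStarAdj FR Λ).counit.app M).hom.app X)
      | .of α => (isZero_atInfty_toMod_of FR Λ _ α).isIso (h (FF.of α)) _
      | .infty => inferInstanceAs (IsIso (𝟙 (M.obj.obj .infty)))
    have := Mod.isIso_of_isIso_app ((iLowerStarAdj FR Λ).counit.app M)
    exact (iLowerStarAdj FR Λ).mem_essImage_of_counit_isIso M

def jLowerStarHomEquiv (M : Mod (OFF FR Λ)) (N : Mod (FF FR Λ)) :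
    ((jStar FR Λ).obj M ⟶ N) ≃ (M ⟶ (extendByZero FR Λ N).toMod) where
  toFun η := ModOFF.homMk (η ≫ (extendByZero FR Λ N).restrictIso.inv) 0
    fun _ => (isZero_extendByZero_toMod_infty FR Λ N).eq_of_tgt _ _
  invFun θ := (jStar FR Λ).map θ ≫ (extendByZero FR Λ N).restrictIso.hom
  left_inv _ := ModFF.hom_ext fun _ => rfl
  right_inv _ :=
    ModOFF.hom_ext (fun _ => rfl) ((isZero_extendByZero_toMod_infty FR Λ N).eq_of_tgt _ _)

def jLowerStar : Mod (FF FR Λ) ⥤ Mod (OFF FR Λ) :=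
  Adjunction.rightAdjointOfEquiv (G_obj := fun N => (extendByZero FR Λ N).toMod)
    (jLowerStarHomEquiv FR Λ) fun _ _ N _ _ =>
      ModOFF.hom_ext (fun _ => rfl) ((isZero_extendByZero_toMod_infty FR Λ N).eq_of_tgt _ _)

def jLowerStarAdj : jStar FR Λ ⊣ jLowerStar FR Λ := Adjunction.adjunctionOfEquivRight _ _

def jLowerStarFullyFaithful : (jLowerStar FR Λ).FullyFaithful where
  preimage {N N'} θ := (extendByZero FR Λ N).restrictIso.inv ≫ (jStar FR Λ).map θ ≫
    (extendByZero FR Λ N').restrictIso.hom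
  map_preimage {_ N'} _ :=
    ModOFF.hom_ext (fun _ => rfl) ((isZero_extendByZero_toMod_infty FR Λ N').eq_of_tgt _ _)
  preimage_map _ := ModFF.hom_ext fun _ => rfl

def lanDescOfHom {N : Mod (FF FR Λ)} {M : Mod (OFF FR Λ)} (η : N ⟶ (jStar FR Λ).obj M) :
    ModFF.LanInfty N →ₗ[R] M.obj.obj .infty :=
  ModFF.lanDesc
    (fun α => (M.obj.map (OFF.toInfty (.of α) 1)).hom.comp (η.hom.app (FF.of α)).hom)
    fun {α β} f m => (congrArg (M.obj.map (OFF.toInfty (.of β) 1))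
      (ConcreteCategory.congr_hom (η.hom.naturality f) m)).trans
      (ModOFF.map_comp_toInfty M (X := .of α) (Y := .of β) f _)

def jLowerShriekHomEquiv (N : Mod (FF FR Λ)) (M : Mod (OFF FR Λ)) :
    ((lan FR Λ N).toMod ⟶ M) ≃ (N ⟶ (jStar FR Λ).obj M) where
  toFun θ := (lan FR Λ N).restrictIso.inv ≫ (jStar FR Λ).map θ
  invFun η := ModOFF.homMk ((lan FR Λ N).restrictIso.hom ≫ η) (lanDescOfHom FR Λ η)
    fun α => AddCommGrpCat.ext fun m =>
      (congrArg (lanDescOfHom FR Λ η) ((lan FR Λ N).toMod_map_toInfty α m)).trans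
        (ModFF.lanDesc_lanι _ _ α m)
  left_inv θ := ModOFF.hom_ext (fun _ => rfl) <| AddCommGrpCat.ext fun x =>
    LinearMap.congr_fun (ModFF.lanInfty_hom_ext (f := lanDescOfHom FR Λ _)
      (g := ModOFF.appInfty θ) fun α m => (ModFF.lanDesc_lanι _ _ α m).trans
        ((ConcreteCategory.congr_hom (θ.hom.naturality (OFF.toInfty (.of α) 1)) m).symm.trans
          (congrArg (θ.hom.app .infty) ((lan FR Λ N).toMod_map_toInfty α m)))) x
  right_inv _ := ModFF.hom_ext fun _ => rfl

theorem jLowerShriekHomEquiv_comp (N : Mod (FF FR Λ)) (M M' : Mod (OFF FR Λ)) (g : M ⟶ M')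
    (θ : (lan FR Λ N).toMod ⟶ M) :
    jLowerShriekHomEquiv FR Λ N M' (θ ≫ g) =
      jLowerShriekHomEquiv FR Λ N M θ ≫ (jStar FR Λ).map g :=
  ModFF.hom_ext fun _ => rfl

def jLowerShriek : Mod (FF FR Λ) ⥤ Mod (OFF FR Λ) :=
  Adjunction.leftAdjointOfEquiv (jLowerShriekHomEquiv FR Λ) (jLowerShriekHomEquiv_comp FR Λ)

def jLowerShriekAdj : jLowerShriek FR Λ ⊣ jStar FR Λ :=
  Adjunction.adjunctionOfEquivLeft (jLowerShriekHomEquiv FR Λ) (jLowerShriekHomEquiv_comp FR Λ)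

def jLowerShriekFullyFaithful : (jLowerShriek FR Λ).FullyFaithful :=
  (Adjunction.Triple.fullyFaithfulEquiv ⟨jLowerShriekAdj FR Λ, jLowerStarAdj FR Λ⟩).symm
    (jLowerStarFullyFaithful FR Λ)

section Statements

variable {Γ : Type u} [Group Γ] [PartialOrder Γ]
  [CovariantClass Γ Γ (· * ·) (· ≤ ·)] [CovariantClass Γ Γ (Function.swap (· * ·)) (· ≤ ·)]
  {R : Type u} [Ring R]

/-- The functors `i_* : Mod R ⥤ Mod oFF_Λ R` (with `(i_*V)(λ) = 0` for
`λ ∈ Λ` and `(i_*V)(∞) = V`), the restriction `j^* : Mod oFF_Λ R ⥤ Mod FF_Λ R`, the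
functor `j_* : Mod FF_Λ R ⥤ Mod oFF_Λ R` (with `(j_*M)(λ) = M(λ)` and `(j_*M)(∞) = 0`)
and `i^! : Mod oFF_Λ R ⥤ Mod R` (with `i^!(M) = M(∞)`) fit into a recollement of abelian
categories: `j^*` admits a left adjoint `j_!` and the right adjoint `j_*`, with `j_!` and
`j_*` fully faithful; `i_*` is fully faithful and admits a left adjoint `i^*` and the
right adjoint `i^!`; and the essential image of `i_*` equals the full subcategory of
those `M` with `j^*(M) = 0`. -/
theorem statement_2 (FR : RingFiltration Γ R) (Λ : Set Γ) :
    ∃ (istar : ModuleCat.{u} R ⥤ Mod (OFF FR Λ))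
      (iupper : Mod (OFF FR Λ) ⥤ ModuleCat.{u} R)   -- i^!
      (istarL : Mod (OFF FR Λ) ⥤ ModuleCat.{u} R)   -- i^*
      (jbang : Mod (FF FR Λ) ⥤ Mod (OFF FR Λ))      -- j_!
      (jupper : Mod (FF FR Λ) ⥤ Mod (OFF FR Λ)),    -- j_*
      -- object formulas for i_*
      (∀ (V : ModuleCat.{u} R) (α : Λ), IsZero ((istar.obj V).obj.obj (OFF.of α))) ∧
      (∀ V : ModuleCat.{u} R, Nonempty ((istar.obj V).obj.obj OFF.infty ≅ AddCommGrpCat.of V)) ∧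
      -- object formulas for j_*
      (∀ (N : Mod (FF FR Λ)) (α : Λ),
        Nonempty ((jupper.obj N).obj.obj (OFF.of α) ≅ N.obj.obj (FF.of α))) ∧
      (∀ N : Mod (FF FR Λ), IsZero ((jupper.obj N).obj.obj OFF.infty)) ∧
      -- object formula for i^!
      (∀ M : Mod (OFF FR Λ), Nonempty (AddCommGrpCat.of (iupper.obj M) ≅ M.obj.obj OFF.infty)) ∧
      -- the two adjoint triples
      Nonempty (jbang ⊣ jStar FR Λ) ∧
      Nonempty (jStar FR Λ ⊣ jupper) ∧
      Nonempty (istarL ⊣ istar) ∧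
      Nonempty (istar ⊣ iupper) ∧
      -- full faithfulness
      jbang.Full ∧ jbang.Faithful ∧
      jupper.Full ∧ jupper.Faithful ∧
      istar.Full ∧ istar.Faithful ∧
      -- essential image of `i_*` is the kernel of `j^*`
      (∀ M : Mod (OFF FR Λ), istar.essImage M ↔ IsZero ((jStar FR Λ).obj M)) := by
  exact ⟨iLowerStar FR Λ, iUpperShriek FR Λ, iUpperStar FR Λ, jLowerShriek FR Λ, jLowerStar FR Λ,
    isZero_atInfty_toMod_of FR Λ, fun _ => ⟨Iso.refl _⟩, fun _ _ => ⟨Iso.refl _⟩,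
    isZero_extendByZero_toMod_infty FR Λ, fun _ => ⟨Iso.refl _⟩,
    ⟨jLowerShriekAdj FR Λ⟩, ⟨jLowerStarAdj FR Λ⟩,
    ⟨iUpperStarAdj FR Λ⟩, ⟨iLowerStarAdj FR Λ⟩,
    (jLowerShriekFullyFaithful FR Λ).full, (jLowerShriekFullyFaithful FR Λ).faithful,
    (jLowerStarFullyFaithful FR Λ).full, (jLowerStarFullyFaithful FR Λ).faithful,
    (iLowerStarFullyFaithful FR Λ).full, (iLowerStarFullyFaithful FR Λ).faithful,
    iLowerStar_essImage_iff FR Λ⟩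

end Statements

end GliderPaper
end
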